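/- Let S = {p₁, …, pₙ} ⊆ ℝ² be a set of n points in general position whose x-coordinates are strictly increasing in the index, and such that p₂, …, pₙ appear in counterclockwise order around p₁, i.e., for all 2 ≤ a < b ≤ n the triple (p₁, p_a, p_b) is positively oriented. Suppose there are indices 2 ≤ a < b < c < d < e ≤ n such that {p_a, p_b, p_c, p_d, p_e} is a 5-hole of S and each of p_b, p_c, p_d lies strictly below the line through p_a and p_e (i.e., the triples (p_a, p_b, p_e), (p_a, p_c, p_e) and (p_a, p_d, p_e) are all positively oriented). Then S contains a 6-hole. -/

import Mathlib

/-- Orientation determinant of three points in the plane: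
`det [[1,1,1],[pₓ,qₓ,rₓ],[p_y,q_y,r_y]]`.
The triple `(p,q,r)` is positively oriented iff `det3 p q r > 0`,
and negatively oriented iff `det3 p q r < 0`. -/
noncomputable def det3 (p q r : ℝ × ℝ) : ℝ :=
  Matrix.det !![(1:ℝ), 1, 1; p.1, q.1, r.1; p.2, q.2, r.2]

/-- A set of points in the plane is in general position if no three
distinct points of it are collinear. -/
def InGenPos (S : Set (ℝ × ℝ)) : Prop :=
  ∀ p ∈ S, ∀ q ∈ S, ∀ r ∈ S, p ≠ q → p ≠ r → q ≠ r →
    ¬ Collinear ℝ ({p, q, r} : Set (ℝ × ℝ))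

/-- `P` is a `k`-gon of `S`: a `k`-element subset of `S` in convex position,
i.e. every point of `P` is an extreme point of the convex hull of `P`. -/
def IsGon (k : ℕ) (S P : Set (ℝ × ℝ)) : Prop :=
  P ⊆ S ∧ P.Finite ∧ P.ncard = k ∧
    ∀ p ∈ P, p ∈ Set.extremePoints ℝ (convexHull ℝ P)

/-- `P` is a `k`-hole of `S`: a `k`-gon of `S` whose convex hull contains
no point of `S` other than the `k` points of `P`. -/
def IsHole (k : ℕ) (S P : Set (ℝ × ℝ)) : Prop :=
  IsGon k S P ∧ ∀ q ∈ S, q ∈ convexHull ℝ P → q ∈ P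

/-!
Sorted by abscissa, the convex pentagon `p a, …, p e` whose middle vertices lie below the chord
`p a, p e` is counterclockwise, and so is the hexagon obtained by putting `p 1` in front of it.
Let `q` be the point of `S` in the triangle `p 1, p a, p e` strictly above the chord that is closest
to the line `p a, p e`. Then `q, p a, …, p e` is a convex hexagon, and it is empty: the chord cuts
it into the empty pentagon and the triangle `q, p a, p e`, which by the choice of `q` contains no
other point of `S`.
-/

lemma det3_eq (p q r : ℝ × ℝ) :
    det3 p q r = (q.1 - p.1) * (r.2 - p.2) - (r.1 - p.1) * (q.2 - p.2) := by
  simp only [det3, Matrix.det_fin_three, Matrix.of_apply, Matrix.cons_val', Matrix.cons_val_zero,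
    Matrix.cons_val_one, Matrix.cons_val_fin_one, Matrix.cons_val, one_mul]
  ring

lemma det3_rotate (p q r : ℝ × ℝ) : det3 p q r = det3 q r p := by
  simp only [det3_eq]; ring

lemma det3_swap (p q r : ℝ × ℝ) : det3 p q r = -det3 q p r := by
  simp only [det3_eq]; ring

@[simp] lemma det3_self_left (p q : ℝ × ℝ) : det3 p p q = 0 := by simp only [det3_eq]; ring

@[simp] lemma det3_self_mid (p q : ℝ × ℝ) : det3 p q p = 0 := by simp only [det3_eq]; ring

@[simp] lemma det3_self_right (p q : ℝ × ℝ) : det3 p q q = 0 := by simp only [det3_eq]; ring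

lemma det3_add_det3_add_det3 (p q r x : ℝ × ℝ) :
    det3 q r x + det3 r p x + det3 p q x = det3 p q r := by
  simp only [det3_eq]; ring

/-- Cramer's rule, in barycentric form. -/
lemma det3_smul_eq (p q r x : ℝ × ℝ) :
    det3 p q r • x = det3 q r x • p + det3 r p x • q + det3 p q x • r := by
  ext <;> simp only [det3_eq, Prod.smul_fst, Prod.smul_snd, Prod.fst_add, Prod.snd_add,
    smul_eq_mul] <;> ring

lemma det3_mul_det3 (p q r u w x : ℝ × ℝ) :
    det3 p q r * det3 u w x =
      det3 q r x * det3 u w p + det3 r p x * det3 u w q + det3 p q x * det3 u w r := by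
  simp only [det3_eq]; ring

lemma det3_add_smul {a b : ℝ} (hab : a + b = 1) (p q x y : ℝ × ℝ) :
    det3 p q (a • x + b • y) = a * det3 p q x + b * det3 p q y := by
  obtain rfl : b = 1 - a := by linarith
  simp only [det3_eq, Prod.fst_add, Prod.snd_add, Prod.smul_fst, Prod.smul_snd, smul_eq_mul]
  ring

lemma convex_setOf_det3_nonneg (p q : ℝ × ℝ) : Convex ℝ {x | 0 ≤ det3 p q x} := by
  intro x hx y hy a b ha hb hab
  rw [Set.mem_ofPred_eq, det3_add_smul hab]
  exact add_nonneg (mul_nonneg ha hx) (mul_nonneg hb hy)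

lemma det3_nonneg_of_mem_convexHull {s : Set (ℝ × ℝ)} {p q x : ℝ × ℝ}
    (hs : ∀ y ∈ s, 0 ≤ det3 p q y) (hx : x ∈ convexHull ℝ s) : 0 ≤ det3 p q x :=
  convexHull_min hs (convex_setOf_det3_nonneg p q) hx

lemma mem_convexHull_of_det3_nonneg {p q r x : ℝ × ℝ} (hpqr : 0 < det3 p q r)
    (hp : 0 ≤ det3 q r x) (hq : 0 ≤ det3 r p x) (hr : 0 ≤ det3 p q x) :
    x ∈ convexHull ℝ {p, q, r} := by
  have hx : x = (det3 q r x / det3 p q r) • p + (det3 r p x / det3 p q r) • q +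
      (det3 p q x / det3 p q r) • r := by
    simp only [div_eq_inv_mul, mul_smul, ← smul_add, ← det3_smul_eq]
    rw [inv_smul_smul₀ hpqr.ne']
  have hmem := (convex_convexHull ℝ ({p, q, r} : Set (ℝ × ℝ))).sum_mem (t := Finset.univ)
    (w := ![det3 q r x / det3 p q r, det3 r p x / det3 p q r, det3 p q x / det3 p q r])
    (z := ![p, q, r])
    (fun i _ => by
      fin_cases i
      exacts [div_nonneg hp hpqr.le, div_nonneg hq hpqr.le, div_nonneg hr hpqr.le])
    (by simp only [Fin.sum_univ_three, Matrix.cons_val]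
        rw [← add_div, ← add_div, det3_add_det3_add_det3, div_self hpqr.ne'])
    (fun i _ => subset_convexHull ℝ _ (by fin_cases i <;> simp))
  rw [hx]
  simpa [Fin.sum_univ_three] using hmem

lemma eq_of_det3_eq_zero {u v w x : ℝ × ℝ} (h₁ : det3 u v x = 0) (h₂ : det3 v w x = 0)
    (huvw : det3 u v w ≠ 0) : x = v := by
  have e₁ : (x.1 - v.1) * det3 u v w = det3 u v x * (w.1 - v.1) - det3 v w x * (v.1 - u.1) := by
    simp only [det3_eq]; ring
  have e₂ : (x.2 - v.2) * det3 u v w = det3 u v x * (w.2 - v.2) - det3 v w x * (v.2 - u.2) := by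
    simp only [det3_eq]; ring
  rw [h₁, h₂, zero_mul, zero_mul, sub_zero] at e₁ e₂
  exact Prod.ext (by simpa [huvw, sub_eq_zero] using e₁) (by simpa [huvw, sub_eq_zero] using e₂)

lemma mem_extremePoints_of_det3_nonneg {P : Set (ℝ × ℝ)} {u v w : ℝ × ℝ} (hv : v ∈ P)
    (hu : ∀ x ∈ P, 0 ≤ det3 u v x) (hw : ∀ x ∈ P, 0 ≤ det3 v w x) (huvw : det3 u v w ≠ 0) :
    v ∈ (convexHull ℝ P).extremePoints ℝ := by
  refine ⟨subset_convexHull ℝ P hv, fun x₁ hx₁ x₂ hx₂ hv' => ?_⟩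
  obtain ⟨a, b, ha, hb, hab, hx⟩ := hv'
  have hzero : ∀ p q, (∀ x ∈ P, 0 ≤ det3 p q x) → det3 p q v = 0 →
      det3 p q x₁ = 0 := by
    intro p q hpq hv0
    rw [← hx, det3_add_smul hab] at hv0
    have h₁ := ((add_eq_zero_iff_of_nonneg
      (mul_nonneg ha.le (det3_nonneg_of_mem_convexHull hpq hx₁))
      (mul_nonneg hb.le (det3_nonneg_of_mem_convexHull hpq hx₂))).1 hv0).1
    exact (mul_eq_zero.1 h₁).resolve_left ha.ne'
  exact eq_of_det3_eq_zero (hzero u v hu (det3_self_right u v))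
    (hzero v w hw (det3_self_mid v w)) huvw

lemma collinear_of_det3_eq_zero {p q r : ℝ × ℝ} (h : det3 p q r = 0) :
    Collinear ℝ ({p, q, r} : Set (ℝ × ℝ)) := by
  rcases eq_or_ne p q with rfl | hpq
  · simpa using collinear_pair ℝ p r
  have hd : (q.1 - p.1) ^ 2 + (q.2 - p.2) ^ 2 ≠ 0 := by
    intro h0
    exact hpq (Prod.ext (by nlinarith [sq_nonneg (q.1 - p.1), sq_nonneg (q.2 - p.2)])
      (by nlinarith [sq_nonneg (q.1 - p.1), sq_nonneg (q.2 - p.2)]))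
  -- `r` equals its orthogonal projection onto the line `p q`
  have hr : r = AffineMap.lineMap p q
      (((r.1 - p.1) * (q.1 - p.1) + (r.2 - p.2) * (q.2 - p.2)) /
        ((q.1 - p.1) ^ 2 + (q.2 - p.2) ^ 2)) := by
    rw [det3_eq] at h
    ext <;> simp only [AffineMap.lineMap_apply_module, Prod.fst_add, Prod.snd_add, Prod.smul_fst,
      Prod.smul_snd, smul_eq_mul] <;> field_simp
    · linear_combination (p.2 - q.2) * h
    · linear_combination (q.1 - p.1) * h
  have hcol := collinear_insert_of_mem_affineSpan_pair (k := ℝ)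
    (hr ▸ AffineMap.lineMap_mem_affineSpan_pair _ p q : r ∈ line[ℝ, p, q])
  rwa [Set.insert_comm, Set.pair_comm] at hcol

lemma InGenPos.mono {S T : Set (ℝ × ℝ)} (hS : InGenPos S) (hTS : T ⊆ S) : InGenPos T :=
  fun p hp q hq r hr => hS p (hTS hp) q (hTS hq) r (hTS hr)

lemma InGenPos.det3_ne_zero {S : Set (ℝ × ℝ)} (hS : InGenPos S) {p q r : ℝ × ℝ} (hp : p ∈ S)
    (hq : q ∈ S) (hr : r ∈ S) (hpq : p ≠ q) (hpr : p ≠ r) (hqr : q ≠ r) : det3 p q r ≠ 0 :=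
  fun h => hS p hp q hq r hr hpq hpr hqr (collinear_of_det3_eq_zero h)

lemma exists_mem_segment_fst_eq {u v w : ℝ × ℝ} (huv : u.1 < v.1) (hvw : v.1 < w.1) :
    ∃ m ∈ segment ℝ u w, m.1 = v.1 ∧ det3 u v w = (w.1 - u.1) * (m.2 - v.2) := by
  have hwu : 0 < w.1 - u.1 := by linarith
  refine ⟨AffineMap.lineMap u w ((v.1 - u.1) / (w.1 - u.1)), ?_, ?_, ?_⟩
  · rw [segment_eq_image_lineMap]
    refine ⟨_, ⟨div_nonneg (by linarith) hwu.le, (div_le_one hwu).2 (by linarith)⟩, rfl⟩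
  all_goals
    simp only [AffineMap.lineMap_apply_module, Prod.fst_add, Prod.snd_add, Prod.smul_fst,
      Prod.smul_snd, smul_eq_mul, det3_eq]
    field_simp
    ring

/-- A corner `v` of a convex set lying strictly below a chord `A E` cannot lie strictly above
another chord `u w`: the vertical line through `v` would meet the set on both sides of `v`. -/
lemma det3_nonneg_of_mem_extremePoints {C : Set (ℝ × ℝ)} (hC : Convex ℝ C) {u v w A E : ℝ × ℝ}
    (hv : v ∈ C.extremePoints ℝ) (hu : u ∈ C) (hw : w ∈ C) (hA : A ∈ C) (hE : E ∈ C)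
    (huv : u.1 < v.1) (hvw : v.1 < w.1) (hAv : A.1 < v.1) (hvE : v.1 < E.1)
    (hAvE : 0 < det3 A v E) : 0 ≤ det3 u v w := by
  by_contra! huvw
  obtain ⟨m, hm, hm₁, hm₂⟩ := exists_mem_segment_fst_eq huv hvw
  obtain ⟨g, hg, hg₁, hg₂⟩ := exists_mem_segment_fst_eq hAv hvE
  have hmv : m.2 < v.2 := by nlinarith
  have hvg : v.2 < g.2 := by nlinarith
  have hseg : v ∈ openSegment ℝ m g := by
    rw [show m = (v.1, m.2) from Prod.ext hm₁ rfl, show g = (v.1, g.2) from Prod.ext hg₁ rfl,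
      ← Prod.image_mk_openSegment_right, openSegment_eq_Ioo (hmv.trans hvg)]
    exact ⟨v.2, ⟨hmv, hvg⟩, rfl⟩
  have hmv' := hv.2 (hC.segment_subset hu hw hm) (hC.segment_subset hA hE hg) hseg
  exact hmv.ne (congrArg Prod.snd hmv')

lemma det3_pos_of_mem_convexHull {p a e q u w : ℝ × ℝ} (hq : q ∈ convexHull ℝ {p, a, e})
    (hpae : 0 < det3 p a e) (haeq : 0 < det3 a e q) (hp : 0 < det3 u w p)
    (ha : 0 ≤ det3 u w a) (he : 0 ≤ det3 u w e) : 0 < det3 u w q := by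
  have hep : 0 ≤ det3 e p q := det3_nonneg_of_mem_convexHull (by
    simp only [Set.mem_insert_iff, Set.mem_singleton_iff, forall_eq_or_imp, forall_eq]
    exact ⟨(det3_self_right e p).ge, by rw [det3_rotate]; exact hpae.le, (det3_self_mid e p).ge⟩) hq
  have hpa : 0 ≤ det3 p a q := det3_nonneg_of_mem_convexHull (by
    simp only [Set.mem_insert_iff, Set.mem_singleton_iff, forall_eq_or_imp, forall_eq]
    exact ⟨(det3_self_mid p a).ge, (det3_self_right p a).ge, hpae.le⟩) hq
  refine pos_of_mul_pos_right ?_ hpae.le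
  rw [det3_mul_det3]
  positivity

lemma eq_of_det3_nonneg_of_le {a e q r : ℝ × ℝ} (hq : 0 < det3 a e q) (he : 0 ≤ det3 e q r)
    (ha : 0 ≤ det3 q a r) (hle : det3 a e q ≤ det3 a e r) : r = q := by
  have hsum := det3_add_det3_add_det3 a e q r
  exact eq_of_det3_eq_zero (by linarith) (by linarith) (det3_rotate a e q ▸ hq.ne')

lemma Fin.add_one_ne_self {n : ℕ} (hn : 1 ≤ n) (i : Fin (n + 1)) : i + 1 ≠ i := by
  have h := Fin.val_add_one i
  simp only [ne_eq, Fin.ext_iff, Fin.val_last] at *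
  split_ifs at h <;> omega

lemma Fin.add_one_add_one_ne_self {n : ℕ} (hn : 2 ≤ n) (i : Fin (n + 1)) : i + 1 + 1 ≠ i := by
  have h₁ := Fin.val_add_one i
  have h₂ := Fin.val_add_one (i + 1)
  have := i.isLt
  simp only [ne_eq, Fin.ext_iff, Fin.val_last] at *
  split_ifs at h₁ h₂ <;> omega

/-- The points `v 0, v 1, …, v (k-1)` are the vertices of a convex polygon in
counterclockwise order. -/
def IsCcw {k : ℕ} (v : Fin k → ℝ × ℝ) : Prop :=
  ∀ ⦃i j l : Fin k⦄, i < j → j < l → 0 < det3 (v i) (v j) (v l)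

lemma isCcw_of_mem_extremePoints {n : ℕ} {v : Fin (n + 1) → ℝ × ℝ}
    (hmono : StrictMono fun i => (v i).1) (hgp : InGenPos (Set.range v))
    (hext : ∀ i, v i ∈ (convexHull ℝ (Set.range v)).extremePoints ℝ)
    (hchord : ∀ j, 0 < j → j < Fin.last n → 0 < det3 (v 0) (v j) (v (Fin.last n))) :
    IsCcw v := by
  intro i j l hij hjl
  have h0j : 0 < j := lt_of_le_of_lt (Fin.zero_le i) hij
  have hjn : j < Fin.last n := lt_of_lt_of_le hjl (Fin.le_last l)
  have hne : ∀ {a b}, a < b → v a ≠ v b := fun hab h =>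
    hab.ne (hmono.injective (congrArg Prod.fst h))
  have hmem : ∀ a, v a ∈ convexHull ℝ (Set.range v) := fun a =>
    subset_convexHull ℝ _ (Set.mem_range_self a)
  refine lt_of_le_of_ne ?_ (hgp.det3_ne_zero (Set.mem_range_self i) (Set.mem_range_self j)
    (Set.mem_range_self l) (hne hij) (hne (hij.trans hjl)) (hne hjl)).symm
  exact det3_nonneg_of_mem_extremePoints (convex_convexHull ℝ _) (hext j) (hmem i) (hmem l)
    (hmem 0) (hmem _) (hmono hij) (hmono hjl) (hmono h0j) (hmono hjn) (hchord j h0j hjn)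

namespace IsCcw

section

variable {k : ℕ} {v : Fin k → ℝ × ℝ}

lemma det3_pos_of_cyclic (hv : IsCcw v) {i j l : Fin k}
    (h : i < j ∧ j < l ∨ j < l ∧ l < i ∨ l < i ∧ i < j) : 0 < det3 (v i) (v j) (v l) := by
  rcases h with ⟨hij, hjl⟩ | ⟨hjl, hli⟩ | ⟨hli, hij⟩
  · exact hv hij hjl
  · rw [det3_rotate]; exact hv hjl hli
  · rw [← det3_rotate]; exact hv hli hij

lemma cons (hv : IsCcw v) {q : ℝ × ℝ} (hq : ∀ ⦃i j⦄, i < j → 0 < det3 q (v i) (v j)) :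
    IsCcw (Fin.cons q v : Fin (k + 1) → ℝ × ℝ) := by
  intro i j l hij hjl
  induction j using Fin.cases with
  | zero => exact absurd hij (Fin.not_lt_zero _)
  | succ j =>
  induction l using Fin.cases with
  | zero => exact absurd hjl (Fin.not_lt_zero _)
  | succ l =>
  induction i using Fin.cases with
  | zero => simpa using hq (Fin.succ_lt_succ_iff.1 hjl)
  | succ i => simpa using hv (Fin.succ_lt_succ_iff.1 hij) (Fin.succ_lt_succ_iff.1 hjl)

lemma tail {p : ℝ × ℝ} (hpv : IsCcw (Fin.cons p v : Fin (k + 1) → ℝ × ℝ)) : IsCcw v :=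
  fun i j l hij hjl => by
    simpa using hpv (Fin.succ_lt_succ_iff.2 hij) (Fin.succ_lt_succ_iff.2 hjl)

end

variable {n : ℕ} {v : Fin (n + 1) → ℝ × ℝ}

lemma det3_nonneg (hv : IsCcw v) {i j l : Fin (n + 1)} (hij : i < j) (hl : l ≤ i ∨ j ≤ l) :
    0 ≤ det3 (v i) (v j) (v l) := by
  rcases hl with hl | hl
  · rcases hl.lt_or_eq with hl | rfl
    · exact (hv.det3_pos_of_cyclic (Or.inr (Or.inr ⟨hl, hij⟩))).le
    · simp
  · rcases hl.lt_or_eq with hl | rfl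
    · exact (hv hij hl).le
    · simp

lemma det3_add_one_pos (hv : IsCcw v) {i m : Fin (n + 1)} (hmi : m ≠ i) (hmi' : m ≠ i + 1) :
    0 < det3 (v i) (v (i + 1)) (v m) := by
  apply hv.det3_pos_of_cyclic
  have h := Fin.val_add_one i
  have := m.isLt
  simp only [Fin.lt_def, ne_eq, Fin.ext_iff, Fin.val_last] at *
  split_ifs at h <;> omega

lemma det3_add_one_nonneg (hv : IsCcw v) (i m : Fin (n + 1)) :
    0 ≤ det3 (v i) (v (i + 1)) (v m) := by
  rcases eq_or_ne m i with rfl | hmi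
  · simp
  rcases eq_or_ne m (i + 1) with rfl | hmi'
  · simp
  exact (hv.det3_add_one_pos hmi hmi').le

lemma det3_add_one_nonneg_of_mem_convexHull (hv : IsCcw v) (i : Fin (n + 1)) {x : ℝ × ℝ}
    (hx : x ∈ convexHull ℝ (Set.range v)) : 0 ≤ det3 (v i) (v (i + 1)) x :=
  det3_nonneg_of_mem_convexHull (by rintro _ ⟨m, rfl⟩; exact hv.det3_add_one_nonneg i m) hx

lemma injective (hv : IsCcw v) (hn : 2 ≤ n) : Function.Injective v := by
  intro i j hij
  by_contra hne
  rcases eq_or_ne j (i + 1) with rfl | hj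
  · have := hv.det3_add_one_pos (i := i + 1) (m := i) (Ne.symm (by simpa using hne))
      (Fin.add_one_add_one_ne_self hn i).symm
    simp [hij] at this
  · have := hv.det3_add_one_pos (Ne.symm hne) hj
    simp [hij] at this

lemma mem_extremePoints (hv : IsCcw v) (hn : 2 ≤ n) (j : Fin (n + 1)) :
    v j ∈ (convexHull ℝ (Set.range v)).extremePoints ℝ := by
  obtain ⟨i, rfl⟩ : ∃ i, i + 1 = j := ⟨j - 1, sub_add_cancel j 1⟩
  refine mem_extremePoints_of_det3_nonneg (Set.mem_range_self _)
    (by rintro _ ⟨m, rfl⟩; exact hv.det3_add_one_nonneg i m)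
    (by rintro _ ⟨m, rfl⟩; exact hv.det3_add_one_nonneg (i + 1) m)
    (hv.det3_add_one_pos (Fin.add_one_add_one_ne_self hn i)
      (Fin.add_one_ne_self (by omega) (i + 1))).ne'

lemma isGon (hv : IsCcw v) (hn : 2 ≤ n) {S : Set (ℝ × ℝ)} (hS : Set.range v ⊆ S) :
    IsGon (n + 1) S (Set.range v) :=
  ⟨hS, Set.finite_range v, by simp [Set.ncard_range_of_injective (hv.injective hn)],
    by rintro _ ⟨j, rfl⟩; exact hv.mem_extremePoints hn j⟩

lemma mem_convexHull_of_det3_add_one_nonneg (hv : IsCcw v) (hn : 2 ≤ n) {x : ℝ × ℝ}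
    (hx : ∀ i, 0 ≤ det3 (v i) (v (i + 1)) x) : x ∈ convexHull ℝ (Set.range v) := by
  -- Fan triangulation from `v 0`: `x` lies in the triangle `v 0, v j, v (j + 1)`, where `j + 1`
  -- is the first vertex `m ≥ 2` such that `x` is to the left of the diagonal `v m → v 0`.
  obtain ⟨m, ⟨hm₂, hm⟩, hmin⟩ := WellFounded.has_min wellFounded_lt
    {m : Fin (n + 1) | 2 ≤ m.val ∧ 0 ≤ det3 (v m) (v 0) x}
    ⟨Fin.last n, by simpa using hn, by simpa using hx (Fin.last n)⟩
  obtain ⟨j, rfl⟩ : ∃ j, j + 1 = m := ⟨m - 1, sub_add_cancel m 1⟩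
  have hj : (j + 1).val = j.val + 1 := by
    have h := Fin.val_add_one j
    split_ifs at h <;> omega
  have h0j : 0 ≤ det3 (v 0) (v j) x := by
    by_cases hj₁ : j.val = 1
    · obtain rfl : j = 0 + 1 := Fin.ext (by
        rw [Fin.val_add_one, if_neg (by simp only [Fin.ext_iff, Fin.val_zero, Fin.val_last]; omega)]
        simp [hj₁])
      exact hx 0
    · by_contra! hneg
      exact hmin j ⟨by omega, by rw [det3_swap]; linarith⟩ (by rw [Fin.lt_def]; omega)
  have hpos : 0 < det3 (v 0) (v j) (v (j + 1)) :=
    hv (by simp only [Fin.lt_def, Fin.val_zero]; omega) (by rw [Fin.lt_def]; omega)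
  refine convexHull_mono ?_ (mem_convexHull_of_det3_nonneg hpos (hx j) hm h0j)
  simp only [Set.insert_subset_iff, Set.singleton_subset_iff, Set.mem_range_self, and_self]

lemma cons_of_mem_convexHull (hv : IsCcw v) {p q : ℝ × ℝ}
    (hp : ∀ ⦃i j⦄, i < j → 0 < det3 p (v i) (v j))
    (hqT : q ∈ convexHull ℝ {p, v 0, v (Fin.last n)})
    (hq : 0 < det3 (v 0) (v (Fin.last n)) q) :
    IsCcw (Fin.cons q v : Fin (n + 2) → ℝ × ℝ) := by
  have h0n : (0 : Fin (n + 1)) < Fin.last n := by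
    refine (Fin.zero_le _).lt_of_ne fun h => ?_
    simp [← h] at hq
  refine hv.cons fun i j hij => ?_
  rw [det3_rotate]
  exact det3_pos_of_mem_convexHull hqT (hp h0n) hq (by rw [← det3_rotate]; exact hp hij)
    (hv.det3_nonneg hij (Or.inl (Fin.zero_le i))) (hv.det3_nonneg hij (Or.inr (Fin.le_last j)))

/-- The diagonal `v 0, v (last n)` cuts the polygon `q, v 0, …, v (last n)` into the polygon `v`
and a triangle whose only point of `S` is `q`. -/
lemma mem_range_cons_of_mem_convexHull (hv : IsCcw v) (hn : 2 ≤ n) {q : ℝ × ℝ}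
    (hcons : IsCcw (Fin.cons q v : Fin (n + 2) → ℝ × ℝ)) {S C : Set (ℝ × ℝ)}
    (hempty : ∀ r ∈ S, r ∈ convexHull ℝ (Set.range v) → r ∈ Set.range v)
    (hC : Convex ℝ C) (hqC : q ∈ C) (h0C : v 0 ∈ C) (hnC : v (Fin.last n) ∈ C)
    (hq : 0 < det3 (v 0) (v (Fin.last n)) q)
    (hmin : ∀ r ∈ S, r ∈ C → 0 < det3 (v 0) (v (Fin.last n)) r →
      det3 (v 0) (v (Fin.last n)) q ≤ det3 (v 0) (v (Fin.last n)) r)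
    {r : ℝ × ℝ} (hrS : r ∈ S) (hr : r ∈ convexHull ℝ (Set.range (Fin.cons q v))) :
    r ∈ Set.range (Fin.cons q v : Fin (n + 2) → ℝ × ℝ) := by
  have hedge := fun i => hcons.det3_add_one_nonneg_of_mem_convexHull i hr
  have hq0 : 0 ≤ det3 q (v 0) r := by simpa using hedge 0
  have hnq : 0 ≤ det3 (v (Fin.last n)) q r := by simpa using hedge (Fin.last (n + 1))
  have hvv : ∀ i ≠ Fin.last n, 0 ≤ det3 (v i) (v (i + 1)) r := fun i hi => by
    have h : (i.succ + 1 : Fin (n + 2)) = (i + 1).succ := Fin.ext (by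
      rw [Fin.val_add_one, Fin.val_succ, Fin.val_succ, Fin.val_add_one, if_neg hi,
        if_neg (by simpa using hi)])
    simpa [h] using hedge i.succ
  rw [Fin.range_cons]
  rcases le_or_gt (det3 (v 0) (v (Fin.last n)) r) 0 with hle | hlt
  · refine Set.mem_insert_of_mem _ (hempty r hrS (hv.mem_convexHull_of_det3_add_one_nonneg hn ?_))
    intro i
    rcases eq_or_ne i (Fin.last n) with rfl | hi
    · rw [Fin.last_add_one, det3_swap]; linarith
    · exact hvv i hi
  · have hrC : r ∈ C := convexHull_min (Set.insert_subset_iff.2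
      ⟨h0C, Set.insert_subset_iff.2 ⟨hnC, Set.singleton_subset_iff.2 hqC⟩⟩) hC
      (mem_convexHull_of_det3_nonneg hq hnq hq0 hlt.le)
    exact Or.inl (eq_of_det3_nonneg_of_le hq hnq hq0 (hmin r hrS hrC hlt))

/-- The new vertex is the point of `S` in the triangle `p, v 0, v (last n)` beyond the edge
`v (last n) → v 0` that is closest to this edge. -/
theorem exists_isHole_succ {p : ℝ × ℝ} {S : Set (ℝ × ℝ)}
    (hpv : IsCcw (Fin.cons p v : Fin (n + 2) → ℝ × ℝ)) (hhole : IsHole (n + 1) S (Set.range v))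
    (hS : S.Finite) (hpS : p ∈ S) (hn : 2 ≤ n) :
    ∃ P, IsHole (n + 2) S P := by
  have hv := hpv.tail
  have hp : ∀ ⦃i j⦄, i < j → 0 < det3 p (v i) (v j) := fun i j hij => by
    simpa using hpv (Fin.succ_pos i) (Fin.succ_lt_succ_iff.2 hij)
  have h0n : (0 : Fin (n + 1)) < Fin.last n := by
    simp only [Fin.lt_def, Fin.val_zero, Fin.val_last]; omega
  set T := convexHull ℝ {p, v 0, v (Fin.last n)}
  set f := det3 (v 0) (v (Fin.last n))
  obtain ⟨q, ⟨hqS, hqT, hq⟩, hmin⟩ := Set.exists_min_image {r | r ∈ S ∧ r ∈ T ∧ 0 < f r} f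
    (hS.subset fun r hr => hr.1)
    ⟨p, hpS, subset_convexHull ℝ _ (by simp), by simpa [f, ← det3_rotate] using hp h0n⟩
  have hcons := hv.cons_of_mem_convexHull hp hqT hq
  refine ⟨_, hcons.isGon (by omega) ?_, fun r hrS hr =>
    hv.mem_range_cons_of_mem_convexHull hn hcons hhole.2 (convex_convexHull ℝ _) hqT
      (subset_convexHull ℝ _ (by simp)) (subset_convexHull ℝ _ (by simp)) hq
      (fun r hrS hrT hr => hmin r ⟨hrS, hrT, hr⟩) hrS hr⟩
  rw [Fin.range_cons]
  exact Set.insert_subset hqS hhole.1.1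

end IsCcw

/-- For x-sorted points `p 1, …, p n` in general position, counterclockwise
around `p 1`: a 5-hole `{p a, p b, p c, p d, p e}` (with
`2 ≤ a < b < c < d < e ≤ n`) whose three middle points lie strictly below the
line through `p a` and `p e` (i.e. the triples `(p a, p b, p e)`,
`(p a, p c, p e)`, `(p a, p d, p e)` are positively oriented) yields a 6-hole
of the whole point set. -/
theorem five_hole_below_line_gives_6hole (n : ℕ) (p : ℕ → ℝ × ℝ)
    (hgp : InGenPos (p '' Set.Icc 1 n))
    (hx : ∀ i j : ℕ, 1 ≤ i → i < j → j ≤ n → (p i).1 < (p j).1)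
    (hccw : ∀ a b : ℕ, 2 ≤ a → a < b → b ≤ n → det3 (p 1) (p a) (p b) > 0)
    (a b c d e : ℕ) (ha : 2 ≤ a) (hab : a < b) (hbc : b < c) (hcd : c < d)
    (hde : d < e) (hen : e ≤ n)
    (hhole : IsHole 5 (p '' Set.Icc 1 n) {p a, p b, p c, p d, p e})
    (h1 : det3 (p a) (p b) (p e) > 0)
    (h2 : det3 (p a) (p c) (p e) > 0)
    (h3 : det3 (p a) (p d) (p e) > 0) :
    ∃ P : Set (ℝ × ℝ), IsHole 6 (p '' Set.Icc 1 n) P := by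
  set idx : Fin 5 → ℕ := ![a, b, c, d, e]
  have hidx : StrictMono idx := Fin.strictMono_iff_lt_succ.2 fun i => by
    fin_cases i
    exacts [hab, hbc, hcd, hde]
  have hbound : ∀ i, 2 ≤ idx i ∧ idx i ≤ n := fun i =>
    ⟨ha.trans (hidx.monotone (Fin.zero_le i)), (hidx.monotone (Fin.le_last i)).trans hen⟩
  have hrange : Set.range (p ∘ idx) = {p a, p b, p c, p d, p e} := by
    ext x
    simp [idx, Fin.exists_fin_succ, eq_comm]
  rw [← hrange] at hhole
  have hv : IsCcw (p ∘ idx) := isCcw_of_mem_extremePoints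
    (fun i j hij => hx _ _ (one_le_two.trans (hbound i).1) (hidx hij) (hbound j).2)
    (hgp.mono hhole.1.1) (fun i => hhole.1.2.2.2 _ (Set.mem_range_self i))
    (fun j h0 h4 => by
      fin_cases j
      exacts [absurd h0 (lt_irrefl _), h1, h2, h3, absurd h4 (lt_irrefl _)])
  have hpv : IsCcw (Fin.cons (p 1) (p ∘ idx) : Fin 6 → ℝ × ℝ) :=
    hv.cons fun i j hij => hccw _ _ (hbound i).1 (hidx hij) (hbound j).2
  exact hpv.exists_isHole_succ hhole ((Set.finite_Icc 1 n).image p) ⟨1, ⟨le_rfl, by omega⟩, rfl⟩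
    (by norm_num)
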